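/- Let u₁⁰, u₁¹, u₂⁰, u₂¹ be real numbers with u₁⁰·u₂¹ − u₁¹·u₂⁰ = 1 and u₁¹ ≠ 0, and set M∞ := (1/u₁¹)·!![u₂¹, 1; 1, u₁⁰]. Let ϑ̃, ϑ be real symmetric 2×2 matrices with det(ϑ) = 0, and suppose c := ϑ̃₁₁·ϑ₂₂·u₁¹ + ϑ₁₁·ϑ̃₂₂·u₁¹ − ϑ₁₁·u₁⁰ − ϑ₂₂·u₂¹ − ϑ̃₁₂·ϑ₁₂·u₁¹ − ϑ̃₂₁·ϑ₂₁·u₁¹ + ϑ₁₂ + ϑ₂₁ ≠ 0. Then there exists exactly one t ∈ ℝ with det(ϑ̃ + t·ϑ − M∞) = 0. -/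

import Mathlib

open Matrix

/-!
Write `ϑ̃ + tϑ − M∞ = A + tϑ` with `A := ϑ̃ − M∞`. For 2×2 matrices `det (A + tB)` is a
quadratic polynomial in `t` whose leading coefficient is `det B`; since `det ϑ = 0` it is
affine, and for symmetric `ϑ` its slope is `c / u₁¹ ≠ 0`, so it has exactly one real root.
-/

theorem Matrix.det_fin_two_add_smul {R : Type*} [CommRing R] (A B : Matrix (Fin 2) (Fin 2) R)
    (t : R) :
    (A + t • B).det = A.det +
      t * (A 0 0 * B 1 1 + B 0 0 * A 1 1 - A 0 1 * B 1 0 - B 0 1 * A 1 0) + t ^ 2 * B.det := by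
  simp only [det_fin_two, add_apply, smul_apply, smul_eq_mul]
  ring

theorem existsUnique_add_mul_eq_zero {K : Type*} [Field K] (a : K) {b : K} (hb : b ≠ 0) :
    ∃! t : K, a + t * b = 0 :=
  ⟨-a / b, by field_simp; ring, fun t ht => by field_simp; linear_combination ht⟩

theorem stmt14_general (u10 u11 u21 : ℝ)
    (h11 : u11 ≠ 0)
    (ϑt ϑ : Matrix (Fin 2) (Fin 2) ℝ) (h2 : ϑ.IsSymm)
    (hdet : ϑ.det = 0)
    (hc : ϑt 0 0 * ϑ 1 1 * u11 + ϑ 0 0 * ϑt 1 1 * u11 - ϑ 0 0 * u10 - ϑ 1 1 * u21 -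
        ϑt 0 1 * ϑ 0 1 * u11 - ϑt 1 0 * ϑ 1 0 * u11 + ϑ 0 1 + ϑ 1 0 ≠ 0) :
    ∃! t : ℝ,
      (ϑt + t • ϑ - (u11⁻¹ • !![u21, 1; 1, u10]) : Matrix (Fin 2) (Fin 2) ℝ).det = 0 := by
  set c := ϑt 0 0 * ϑ 1 1 * u11 + ϑ 0 0 * ϑt 1 1 * u11 - ϑ 0 0 * u10 - ϑ 1 1 * u21 -
    ϑt 0 1 * ϑ 0 1 * u11 - ϑt 1 0 * ϑ 1 0 * u11 + ϑ 0 1 + ϑ 1 0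
  set A := ϑt - u11⁻¹ • !![u21, 1; 1, u10]
  have hslope : A 0 0 * ϑ 1 1 + ϑ 0 0 * A 1 1 - A 0 1 * ϑ 1 0 - ϑ 0 1 * A 1 0 = c / u11 := by
    simp only [A, c, Matrix.sub_apply, Matrix.smul_apply, smul_eq_mul, of_apply, cons_val',
      cons_val_zero, cons_val_one, empty_val', cons_val_fin_one]
    field_simp
    linear_combination u11 * (ϑt 1 0 - ϑt 0 1) * h2.apply 0 1
  have hdet_affine (t : ℝ) :
      (ϑt + t • ϑ - u11⁻¹ • !![u21, 1; 1, u10]).det = A.det + t * (c / u11) := by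
    rw [add_sub_right_comm, det_fin_two_add_smul, hslope, hdet, mul_zero, add_zero]
  simp only [hdet_affine]
  exact existsUnique_add_mul_eq_zero _ (div_ne_zero hc h11)

/-- if `det ϑ = 0` but the linear coefficient `c ≠ 0`, there is exactly one
real `t` with `det(ϑ̃ + tϑ − M∞) = 0`. -/
theorem stmt14 (u10 u11 u20 u21 : ℝ)
    (hW : u10 * u21 - u11 * u20 = 1) (h11 : u11 ≠ 0)
    (ϑt ϑ : Matrix (Fin 2) (Fin 2) ℝ) (h1 : ϑt.IsSymm) (h2 : ϑ.IsSymm)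
    (hdet : ϑ.det = 0)
    (hc : ϑt 0 0 * ϑ 1 1 * u11 + ϑ 0 0 * ϑt 1 1 * u11 - ϑ 0 0 * u10 - ϑ 1 1 * u21 -
        ϑt 0 1 * ϑ 0 1 * u11 - ϑt 1 0 * ϑ 1 0 * u11 + ϑ 0 1 + ϑ 1 0 ≠ 0) :
    ∃! t : ℝ,
      (ϑt + t • ϑ - (u11⁻¹ • !![u21, 1; 1, u10]) : Matrix (Fin 2) (Fin 2) ℝ).det = 0 :=
  stmt14_general u10 u11 u21 h11 ϑt ϑ h2 hdet hc
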